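/- arXiv:1806.03221 — 2 statements merged into one kernel-verified Lean document; each statement's English description precedes it below -/
import Mathlib

section
/- For all legal schedules W = (w_1,...,w_{k-1}), the coefficients A_b(q) in Q_W(x;q) = Σ_{b=1}^k x^b A_b(q) satisfy A_b(q) = q^{1+Σ_{i=1}^{k-1}(w_i-1)} A_{k+1-b}(1/q) for 1 ≤ b ≤ k. -/
/-!
`Prev q V` is multilinear in the variables `x_{-1}, …, x_n`; let `setCoeff q V s` be its
coefficient of `∏_{j ∈ s} x_j`. A recursion step with window `w` multiplies this coefficient by
`(1 - q^m)/(1 - q)` if the new variable is in `s` and by `(q^m - q^w)/(1 - q)` otherwise, where `m`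
counts the window variables in `s`. Passing to the complement of `s` exchanges the two cases and
replaces `m` by `w - m`, and since `(1 - q^m)/(1 - q) = q^(w-1) (q^(-(w-m)) - q^(-w))/(1 - q⁻¹)`,
induction gives `setCoeff q V s = q^d · setCoeff q⁻¹ V sᶜ`: the complementation identity,
coefficientwise. Legality keeps every window inside the variables. Setting all `x_i = x`, the
coefficient of `x^b` is the sum over the `b`-subsets, which complementation matches with the
`(k + 1 - b)`-subsets.
-/

open Polynomial Finset

noncomputable section

abbrev K : Type := RatFunc ℚ

def qq : K := RatFunc.X

def qint (q : K) (n : ℕ) : K := ∑ i ∈ Finset.range n, q ^ i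

def Legal (W : List ℕ) : Prop :=
  (∀ h : W ≠ [], 1 ≤ W.head h ∧ W.head h ≤ 2) ∧
    List.Chain' (fun a b => 1 ≤ b ∧ b ≤ a + 1) W

def Prev (q : K) : List ℕ → MvPolynomial ℤ K
  | [] => MvPolynomial.C q * MvPolynomial.X (-1) + MvPolynomial.X 0
  | w :: V =>
      MvPolynomial.C ((1 - q)⁻¹) *
        ((MvPolynomial.X ((V.length : ℤ) + 1) - MvPolynomial.C (q ^ w)) * Prev q V +
          (1 - MvPolynomial.X ((V.length : ℤ) + 1)) *
            MvPolynomial.aeval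
              (fun j : ℤ =>
                if (V.length : ℤ) + 1 - (w : ℤ) ≤ j ∧ j ≤ (V.length : ℤ) then
                  MvPolynomial.C q * MvPolynomial.X j
                else MvPolynomial.X j)
              (Prev q V))

def Psched (q : K) (W : List ℕ) : MvPolynomial ℤ K := Prev q W.reverse

def Qsched (q : K) (W : List ℕ) : Polynomial K :=
  MvPolynomial.aeval (fun _ : ℤ => (Polynomial.X : Polynomial K)) (Psched q W)

def TameFE (q : K) (W : List ℕ) : Prop :=
  ∀ x : K, x ≠ 0 →
    (1 - q / x) * (Qsched q W).eval x +
        x ^ (W.length + 1) * (1 - q * x) * (Qsched q W).eval x⁻¹ =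
      (1 + x ^ (W.length + 1)) * ((1 - q ^ 2) * (W.map (qint q)).prod)

theorem inv_one_sub_mul_one_sub_pow {F : Type*} [Field F] {q : F} (hq : q ≠ 0) {a w : ℕ}
    (haw : a ≤ w) (hw : 1 ≤ w) :
    (1 - q)⁻¹ * (1 - q ^ a) =
      q ^ (w - 1) * ((1 - q⁻¹)⁻¹ * (q⁻¹ ^ (w - a) - q⁻¹ ^ w)) := by
  rcases eq_or_ne q 1 with rfl | hq1
  · simp
  have h1 : 1 - q ≠ 0 := sub_ne_zero.2 hq1.symm
  have h2 : 1 - q⁻¹ ≠ 0 := sub_ne_zero.2 (by simpa [eq_comm] using hq1)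
  rw [inv_pow, inv_pow, pow_sub₀ q hq haw, pow_sub₀ q hq hw]
  field_simp
  ring

theorem inv_one_sub_mul_pow_sub_pow {F : Type*} [Field F] {q : F} (hq : q ≠ 0) {a w : ℕ}
    (haw : a ≤ w) (hw : 1 ≤ w) :
    (1 - q)⁻¹ * (q ^ a - q ^ w) =
      q ^ (w - 1) * ((1 - q⁻¹)⁻¹ * (1 - q⁻¹ ^ (w - a))) := by
  have hw' := inv_one_sub_mul_one_sub_pow hq le_rfl hw
  have ha' := inv_one_sub_mul_one_sub_pow hq haw hw
  rw [Nat.sub_self, pow_zero] at hw'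
  linear_combination hw' - ha'

theorem MvPolynomial.aeval_ite_mul_X_prod_X {R σ : Type*} [CommSemiring R] (p : σ → Prop)
    [DecidablePred p] (c : R) (s : Finset σ) :
    MvPolynomial.aeval
        (fun j => if p j then MvPolynomial.C c * MvPolynomial.X j else MvPolynomial.X j)
        (∏ j ∈ s, MvPolynomial.X j : MvPolynomial σ R) =
      MvPolynomial.C (c ^ #{j ∈ s | p j}) * ∏ j ∈ s, MvPolynomial.X j := by
  have h : ∀ j, (if p j then MvPolynomial.C c * MvPolynomial.X j else MvPolynomial.X j) =
      (if p j then MvPolynomial.C c else 1) * (MvPolynomial.X j : MvPolynomial σ R) := by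
    intro j; split_ifs <;> simp
  simp only [map_prod, MvPolynomial.aeval_X, h, prod_mul_distrib, prod_ite, prod_const,
    one_pow, mul_one, map_pow]

theorem Finset.sum_powersetCard_sdiff {α β : Type*} [DecidableEq α] [AddCommMonoid β]
    (I : Finset α) (f : Finset α → β) {m n : ℕ} (h : m + n = #I) :
    ∑ s ∈ powersetCard m I, f (I \ s) = ∑ s ∈ powersetCard n I, f s := by
  refine sum_nbij' (I \ ·) (I \ ·) ?_ ?_ ?_ ?_ fun _ _ => rfl <;>
    simp +contextual only [mem_powersetCard, sdiff_subset, true_and, sdiff_sdiff_eq_self,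
      card_sdiff_of_subset, implies_true]
  all_goals omega

def vars (n : ℕ) : Finset ℤ := Icc (-1) n

def window (n w : ℕ) : Finset ℤ := Icc ((n : ℤ) + 1 - w) n

theorem vars_nil : vars 0 = {-1, 0} := by
  ext; simp [vars]; omega

theorem vars_succ (n : ℕ) : vars (n + 1) = insert ((n : ℤ) + 1) (vars n) := by
  ext; simp [vars]; omega

theorem succ_notMem_vars (n : ℕ) : (n : ℤ) + 1 ∉ vars n := by
  simp [vars]

theorem card_vars (n : ℕ) : #(vars n) = n + 2 := by
  simp [vars]; omega

theorem filter_le_and_le_eq_window_inter (n w : ℕ) (s : Finset ℤ) :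
    {j ∈ s | (n : ℤ) + 1 - w ≤ j ∧ j ≤ n} = window n w ∩ s := by
  ext; simp [window, and_comm]

theorem card_window (n w : ℕ) : #(window n w) = w := by
  simp [window]

theorem card_window_inter_le (n w : ℕ) (s : Finset ℤ) : #(window n w ∩ s) ≤ w :=
  (card_le_card inter_subset_left).trans (card_window n w).le

theorem card_window_inter_vars_sdiff {n w : ℕ} (hw : w ≤ n + 2) (s : Finset ℤ) :
    #(window n w ∩ (vars n \ s)) = w - #(window n w ∩ s) := by
  have hsub : window n w ⊆ vars n := by
    intro j; simp only [window, vars, mem_Icc]; omega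
  rw [← inter_sdiff_assoc, inter_eq_left.2 hsub, card_sdiff, inter_comm, card_window]

def setCoeff (q : K) : List ℕ → Finset ℤ → K
  | [], s => if s = {-1} then q else if s = {0} then 1 else 0
  | w :: V, s =>
      if (V.length : ℤ) + 1 ∈ s then
        (1 - q)⁻¹ * (1 - q ^ #(window V.length w ∩ s.erase (V.length + 1))) *
          setCoeff q V (s.erase (V.length + 1))
      else (1 - q)⁻¹ * (q ^ #(window V.length w ∩ s) - q ^ w) * setCoeff q V s

section setCoeff

variable {q : K} {w : ℕ} {V : List ℕ} {s : Finset ℤ}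

theorem setCoeff_cons_of_notMem (hs : (V.length : ℤ) + 1 ∉ s) :
    setCoeff q (w :: V) s =
      (1 - q)⁻¹ * (q ^ #(window V.length w ∩ s) - q ^ w) * setCoeff q V s := by
  rw [setCoeff, if_neg hs]

theorem setCoeff_cons_insert (hs : (V.length : ℤ) + 1 ∉ s) :
    setCoeff q (w :: V) (insert ((V.length : ℤ) + 1) s) =
      (1 - q)⁻¹ * (1 - q ^ #(window V.length w ∩ s)) * setCoeff q V s := by
  rw [setCoeff, if_pos (mem_insert_self _ _), erase_insert hs]

end setCoeff

theorem Prev_eq_sum_setCoeff (q : K) (V : List ℕ) :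
    Prev q V = ∑ s ∈ (vars V.length).powerset,
      MvPolynomial.C (setCoeff q V s) * ∏ j ∈ s, MvPolynomial.X j := by
  induction V with
  | nil =>
    have h0 : ({0} : Finset ℤ).powerset = {∅, {0}} := by decide
    rw [List.length_nil, vars_nil, sum_powerset_insert (by simp), h0]
    have h1 : ({-1, 0} : Finset ℤ) ≠ {-1} := by decide
    simp [Prev, setCoeff, h1, add_comm]
  | cons w V ih =>
    have hV := succ_notMem_vars V.length
    rw [Prev, ih, List.length_cons, vars_succ, sum_powerset_insert hV, map_sum,
      mul_sum, mul_sum, ← sum_add_distrib, mul_sum, ← sum_add_distrib]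
    refine sum_congr rfl fun s hs => ?_
    have hts : (V.length : ℤ) + 1 ∉ s := fun h => hV (mem_powerset.1 hs h)
    rw [setCoeff_cons_of_notMem hts, setCoeff_cons_insert hts, prod_insert hts,
      map_mul, MvPolynomial.aeval_C, MvPolynomial.aeval_ite_mul_X_prod_X,
      filter_le_and_le_eq_window_inter]
    simp only [MvPolynomial.algebraMap_eq, map_mul, map_sub, map_one, map_pow]
    ring

theorem coeff_Qsched (q : K) (W : List ℕ) (n : ℕ) :
    (Qsched q W).coeff n = ∑ s ∈ powersetCard n (vars W.length), setCoeff q W.reverse s := by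
  rw [Qsched, Psched, Prev_eq_sum_setCoeff, List.length_reverse, map_sum, finsetSum_coeff,
    powersetCard_eq_filter, sum_filter]
  refine sum_congr rfl fun s _ => ?_
  simp [Polynomial.coeff_X_pow, eq_comm]

def WindowsFit : List ℕ → Prop
  | [] => True
  | w :: V => 1 ≤ w ∧ w ≤ V.length + 2 ∧ WindowsFit V

theorem windowsFit_of_forall_getElem_reverse {V : List ℕ}
    (h : ∀ i (hi : i < V.reverse.length), 1 ≤ V.reverse[i] ∧ V.reverse[i] ≤ i + 2) :
    WindowsFit V := by
  induction V with
  | nil => trivial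
  | cons w V ih =>
    have hw : 1 ≤ w ∧ w ≤ V.length + 2 := by simpa using h V.length (by simp)
    refine ⟨hw.1, hw.2, ih fun i hi => ?_⟩
    simpa [List.getElem_append_left hi] using h i (by simp at hi ⊢; omega)

theorem Legal.one_le_getElem_and_le_add_two {W : List ℕ} (hW : Legal W) :
    ∀ i (hi : i < W.length), 1 ≤ W[i] ∧ W[i] ≤ i + 2 := by
  intro i
  induction i with
  | zero =>
    intro hi
    have h := hW.1 (List.ne_nil_of_length_pos hi)
    rw [List.head_eq_getElem] at h
    omega
  | succ i ih =>
    intro hi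
    have hstep := List.isChain_iff_getElem.1 hW.2 i hi
    have := ih (by omega)
    omega

theorem Legal.windowsFit_reverse {W : List ℕ} (hW : Legal W) : WindowsFit W.reverse :=
  windowsFit_of_forall_getElem_reverse (by simpa using hW.one_le_getElem_and_le_add_two)

theorem setCoeff_eq_mul_setCoeff_inv_sdiff {q : K} (hq : q ≠ 0) {V : List ℕ}
    (hV : WindowsFit V) {s : Finset ℤ} (hs : s ⊆ vars V.length) :
    setCoeff q V s = q ^ (1 + (V.map (· - 1)).sum) * setCoeff q⁻¹ V (vars V.length \ s) := by
  induction V generalizing s with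
  | nil =>
    have hpow : (vars 0).powerset = {∅, {-1}, {0}, {-1, 0}} := by rw [vars_nil]; decide
    have hs' := mem_powerset.2 hs
    rw [List.length_nil, hpow] at hs'
    simp only [mem_insert, mem_singleton] at hs'
    rcases hs' with rfl | rfl | rfl | rfl <;> simp [setCoeff, vars_nil, hq] <;> decide
  | cons w V ih =>
    obtain ⟨hw1, hw2, hV⟩ := hV
    have hVt := succ_notMem_vars V.length
    have hexp : q ^ (1 + ((w :: V).map (· - 1)).sum) =
        q ^ (w - 1) * q ^ (1 + (V.map (· - 1)).sum) := by
      rw [← pow_add, List.map_cons, List.sum_cons]; congr 1; omega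
    rw [List.length_cons, vars_succ] at hs ⊢
    rw [hexp]
    by_cases hts : (V.length : ℤ) + 1 ∈ s
    · rw [← insert_erase hts, insert_sdiff_insert, sdiff_insert_of_notMem hVt,
        setCoeff_cons_insert (notMem_erase _ _),
        setCoeff_cons_of_notMem fun h => hVt (mem_sdiff.1 h).1,
        card_window_inter_vars_sdiff hw2, ih hV (subset_insert_iff.1 hs),
        inv_one_sub_mul_one_sub_pow hq (card_window_inter_le _ _ _) hw1]
      ring
    · rw [insert_sdiff_of_notMem _ hts, setCoeff_cons_of_notMem hts,
        setCoeff_cons_insert fun h => hVt (mem_sdiff.1 h).1,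
        card_window_inter_vars_sdiff hw2, ih hV ((subset_insert_iff_of_notMem hts).1 hs),
        inv_one_sub_mul_pow_sub_pow hq (card_window_inter_le _ _ _) hw1]
      ring

theorem stmt6_general (W : List ℕ) (hW : Legal W) (b : ℕ) (hbk : b ≤ W.length + 1) :
    (Qsched qq W).coeff b =
      qq ^ (1 + (W.map (fun w => w - 1)).sum) *
        (Qsched qq⁻¹ W).coeff (W.length + 1 + 1 - b) := by
  have hcard : b + (W.length + 1 + 1 - b) = #(vars W.length) := by rw [card_vars]; omega
  rw [coeff_Qsched, coeff_Qsched, ← sum_powersetCard_sdiff _ _ hcard, mul_sum]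
  refine sum_congr rfl fun s hs => ?_
  have hs' : s ⊆ vars W.reverse.length := by simpa using (mem_powersetCard.1 hs).1
  rw [setCoeff_eq_mul_setCoeff_inv_sdiff (q := qq) RatFunc.X_ne_zero hW.windowsFit_reverse
    hs', List.length_reverse, List.map_reverse, List.sum_reverse]

/-- the coefficients of Q_W satisfy
A_b(q) = q^{1+Σ(w_i-1)} A_{k+1-b}(1/q) for 1 ≤ b ≤ k, k = W.length + 1. -/
theorem stmt6 (W : List ℕ) (hW : Legal W) (b : ℕ) (hb1 : 1 ≤ b) (hbk : b ≤ W.length + 1) :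
    (Qsched qq W).coeff b =
      qq ^ (1 + (W.map (fun w => w - 1)).sum) *
        (Qsched qq⁻¹ W).coeff (W.length + 1 + 1 - b) :=
  stmt6_general W hW b hbk

end
end

section
/- Let W = (w_1,...,w_{k-1}) be a schedule and 1 ≤ w ≤ w_{k-1}+1. Write P_{W,w} = A_{W,w} + x_k B_{W,w} and let A_{W,w}(x;q), B_{W,w}(x;q) be the specializations with all variables set to x. Then both Q_W(x;q) and Q_{W,w}(x;q) satisfy their respective functional equations if and only if (1-q/x) A_{W,w}(x;q) + x^k(1-xq) B_{W,w}(1/x;q) = [w]_q (1-q^2) Π_{i=1}^{k-1}[w_i]_q. -/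
open Polynomial Finset

noncomputable section

/-- The part A_{W,w}(x;q) of P_{W,w} = A_{W,w} + x_k B_{W,w} not involving the new
variable x_k (here k = W.length + 1), specialized at all variables equal to x. -/
def Apart (q : K) (W : List ℕ) (w : ℕ) (x : K) : K :=
  MvPolynomial.eval
    (fun i : ℤ => if i = (W.length : ℤ) + 1 then 0 else x) (Psched q (W ++ [w]))

/-- The coefficient B_{W,w} of x_k in P_{W,w} = A_{W,w} + x_k B_{W,w}
(P_{W,w} has degree at most 1 in x_k), specialized at all variables equal to x. -/
def Bpart (q : K) (W : List ℕ) (w : ℕ) (x : K) : K :=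
  MvPolynomial.eval (fun _ : ℤ => x)
    (MvPolynomial.pderiv ((W.length : ℤ) + 1) (Psched q (W ++ [w])))

/-! Let `R(x)` (`Qscaled`) be `P_W` with `x_{k-i} ↦ q x_{k-i}` (`1 ≤ i ≤ w`), specialized
at `x`. Since `P_W` involves only `x_{-1}, …, x_{k-1}`, the recursion gives
`A = (R - q^w Q_W)/(1-q)` and `B = (Q_W - R)/(1-q)`, hence `A + B = [w]_q Q_W` and
`A + x B = Q_{W,w}`. For `T(x) = (1-q/x) A(x) + x^k (1-xq) B(1/x)` this yields
`T(x) + x^k T(1/x) = [w]_q · ((1-q/x) Q_W(x) + x^k (1-qx) Q_W(1/x))` and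
`T(x) + x^(k+1) T(1/x) = (1-q/x) Q_{W,w}(x) + x^(k+1) (1-qx) Q_{W,w}(1/x)`.
So, with `c = [w]_q (1-q²) ∏ [w_i]_q`, the two functional equations say that `S = T - c`
satisfies `S(x) + x^k S(1/x) = 0` and `S(x) + x^(k+1) S(1/x) = 0`; subtracting the two
gives `S = 0`.
-/

namespace MvPolynomial

variable {R σ τ : Type*} [CommRing R]

lemma aeval_mem_supported {s : σ → MvPolynomial τ R} {u : Set σ} {t : Set τ}
    {p : MvPolynomial σ R} (hp : p ∈ supported R u) (hs : ∀ i ∈ u, s i ∈ supported R t) :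
    aeval s p ∈ supported R t := by
  have hmap : (supported R u).map (aeval s) ≤ supported R t := by
    rw [supported_eq_adjoin_X, AlgHom.map_adjoin, Algebra.adjoin_le_iff]
    rintro _ ⟨_, ⟨i, hi, rfl⟩, rfl⟩
    simpa using hs i hi
  exact hmap ⟨p, hp, rfl⟩

lemma eval_congr_of_mem_supported {s : Set σ} {p : MvPolynomial σ R}
    (hp : p ∈ supported R s) {f g : σ → R} (hfg : ∀ i ∈ s, f i = g i) :
    eval f p = eval g p :=
  eval₂Hom_congr' rfl (fun i hi _ => hfg i (mem_supported.mp hp hi)) rfl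

lemma pderiv_eq_zero_of_mem_supported {s : Set σ} {p : MvPolynomial σ R}
    (hp : p ∈ supported R s) {i : σ} (hi : i ∉ s) : pderiv i p = 0 :=
  pderiv_eq_zero_of_notMem_vars fun h => hi (mem_supported.mp hp h)

end MvPolynomial

section Schedules

variable (q : K)

def windowScale (n w : ℕ) (j : ℤ) : MvPolynomial ℤ K :=
  if (n : ℤ) + 1 - (w : ℤ) ≤ j ∧ j ≤ (n : ℤ) then MvPolynomial.C q * MvPolynomial.X j
  else MvPolynomial.X j

lemma prev_cons (w : ℕ) (V : List ℕ) :
    Prev q (w :: V) = MvPolynomial.C (1 - q)⁻¹ *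
      ((MvPolynomial.X ((V.length : ℤ) + 1) - MvPolynomial.C (q ^ w)) * Prev q V +
        (1 - MvPolynomial.X ((V.length : ℤ) + 1)) *
          MvPolynomial.aeval (windowScale q V.length w) (Prev q V)) := by
  rfl

lemma windowScale_mem_supported (n w : ℕ) {s : Set ℤ} {j : ℤ} (hj : j ∈ s) :
    windowScale q n w j ∈ MvPolynomial.supported K s := by
  have hX : MvPolynomial.X j ∈ MvPolynomial.supported K s := MvPolynomial.X_mem_supported.mpr hj
  unfold windowScale
  split_ifs
  · exact Subalgebra.mul_mem _ (Subalgebra.algebraMap_mem _ q) hX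
  · exact hX

lemma prev_mem_supported :
    ∀ V : List ℕ, Prev q V ∈ MvPolynomial.supported K (Set.Iic (V.length : ℤ))
  | [] => by
    have hX : ∀ j : ℤ, j ≤ 0 →
        MvPolynomial.X j ∈ MvPolynomial.supported K (Set.Iic ((0 : ℕ) : ℤ)) :=
      fun j hj => MvPolynomial.X_mem_supported.mpr hj
    exact add_mem (Subalgebra.mul_mem _ (Subalgebra.algebraMap_mem _ q) (hX _ (by norm_num)))
      (hX _ le_rfl)
  | w :: V => by
    set S := MvPolynomial.supported K (Set.Iic ((w :: V).length : ℤ))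
    have hle : MvPolynomial.supported K (Set.Iic (V.length : ℤ)) ≤ S :=
      MvPolynomial.supported_mono (Set.Iic_subset_Iic.mpr (by simp))
    have hP : Prev q V ∈ S := hle (prev_mem_supported V)
    have hscaled : MvPolynomial.aeval (windowScale q V.length w) (Prev q V) ∈ S :=
      hle (MvPolynomial.aeval_mem_supported (prev_mem_supported V)
        fun _ hj => windowScale_mem_supported q _ _ hj)
    have hXk : MvPolynomial.X ((V.length : ℤ) + 1) ∈ S :=
      MvPolynomial.X_mem_supported.mpr (by simp)
    rw [prev_cons]
    exact Subalgebra.mul_mem _ (Subalgebra.algebraMap_mem _ _) <| add_mem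
      (Subalgebra.mul_mem _ (sub_mem hXk (Subalgebra.algebraMap_mem _ _)) hP)
      (Subalgebra.mul_mem _ (sub_mem (one_mem _) hXk) hscaled)

end Schedules

lemma one_sub_mul_qint (q : K) (n : ℕ) : (1 - q) * qint q n = 1 - q ^ n :=
  mul_neg_geom_sum q n

section Specialization

variable (q : K) (W : List ℕ) (w : ℕ) (x : K)

def Qscaled : K :=
  MvPolynomial.eval (fun _ : ℤ => x)
    (MvPolynomial.aeval (windowScale q W.length w) (Psched q W))

lemma psched_append : Psched q (W ++ [w]) = Prev q (w :: W.reverse) := by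
  simp [Psched]

lemma qsched_eval : (Qsched q W).eval x = MvPolynomial.eval (fun _ : ℤ => x) (Psched q W) := by
  rw [Qsched, ← Polynomial.coe_aeval_eq_eval, MvPolynomial.comp_aeval_apply]
  simp

lemma apart_eq :
    Apart q W w x = (1 - q)⁻¹ * (Qscaled q W w x - q ^ w * (Qsched q W).eval x) := by
  have hP := prev_mem_supported q W.reverse
  have hagree : ∀ j ∈ Set.Iic (W.reverse.length : ℤ),
      (if j = (W.length : ℤ) + 1 then 0 else x) = x := fun j hj => by
    simp only [Set.mem_Iic, List.length_reverse] at hj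
    exact if_neg (by omega)
  rw [Apart, psched_append, prev_cons]
  simp only [map_mul, map_add, map_sub, map_one, MvPolynomial.eval_C, MvPolynomial.eval_X,
    if_pos, List.length_reverse]
  rw [MvPolynomial.eval_congr_of_mem_supported hP hagree,
    MvPolynomial.eval_congr_of_mem_supported (MvPolynomial.aeval_mem_supported hP
      fun _ hj => windowScale_mem_supported q _ _ hj) hagree, qsched_eval, Qscaled, Psched]
  ring

lemma bpart_eq : Bpart q W w x = (1 - q)⁻¹ * ((Qsched q W).eval x - Qscaled q W w x) := by
  have hP := prev_mem_supported q W.reverse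
  have hk : (W.length : ℤ) + 1 ∉ Set.Iic (W.reverse.length : ℤ) := by simp
  rw [Bpart, psched_append, prev_cons, MvPolynomial.pderiv_C_mul]
  simp only [Derivation.leibniz, map_add, map_sub, Derivation.map_one_eq_zero,
    MvPolynomial.pderiv_C, List.length_reverse, MvPolynomial.pderiv_X_self,
    MvPolynomial.pderiv_eq_zero_of_mem_supported hP hk,
    MvPolynomial.pderiv_eq_zero_of_mem_supported (MvPolynomial.aeval_mem_supported hP
      fun _ hj => windowScale_mem_supported q _ _ hj) hk]
  simp only [smul_eq_mul, mul_zero, zero_add, map_mul, map_add, map_sub, map_zero, map_one,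
    MvPolynomial.eval_C]
  rw [qsched_eval, Qscaled, Psched]
  ring

lemma qsched_append_eval :
    (Qsched q (W ++ [w])).eval x = Apart q W w x + x * Bpart q W w x := by
  rw [apart_eq, bpart_eq, qsched_eval, qsched_eval, psched_append, prev_cons]
  simp only [map_mul, map_add, map_sub, map_one, MvPolynomial.eval_C, MvPolynomial.eval_X,
    List.length_reverse]
  rw [Qscaled, Psched]
  ring

lemma apart_add_bpart (hq : q ≠ 1) :
    Apart q W w x + Bpart q W w x = qint q w * (Qsched q W).eval x := by
  have h1q : 1 - q ≠ 0 := sub_ne_zero.mpr hq.symm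
  rw [apart_eq, bpart_eq, ← mul_right_inj' h1q, ← mul_assoc, one_sub_mul_qint]
  field_simp
  ring

end Specialization

section FunctionalEquation

variable {F : Type*} [Field F] (q : F) (k : ℕ)

def feLhs (f : F → F) (x : F) : F :=
  (1 - q / x) * f x + x ^ k * (1 - q * x) * f x⁻¹

def splitLhs (A B : F → F) (x : F) : F :=
  (1 - q / x) * A x + x ^ k * (1 - x * q) * B x⁻¹

variable {q k}

lemma feLhs_add {A B : F → F} {x : F} (hx : x ≠ 0) :
    feLhs q k (fun y => A y + B y) x = splitLhs q k A B x + x ^ k * splitLhs q k A B x⁻¹ := by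
  have hxk : x ^ k * x⁻¹ ^ k = 1 := by rw [← mul_pow, mul_inv_cancel₀ hx, one_pow]
  simp only [feLhs, splitLhs, inv_inv, div_inv_eq_mul]
  linear_combination -(1 - q / x) * B x * hxk

lemma feLhs_succ_add_mul {A B : F → F} {x : F} (hx : x ≠ 0) :
    feLhs q (k + 1) (fun y => A y + y * B y) x =
      splitLhs q k A B x + x ^ (k + 1) * splitLhs q k A B x⁻¹ := by
  have hxk : x ^ k * x⁻¹ ^ k = 1 := by rw [← mul_pow, mul_inv_cancel₀ hx, one_pow]
  have hx1 : x * x⁻¹ = 1 := mul_inv_cancel₀ hx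
  simp only [feLhs, splitLhs, inv_inv, div_inv_eq_mul]
  linear_combination x ^ k * (1 - q * x) * B x⁻¹ * hx1 - x * (1 - q / x) * B x * hxk

lemma fe_pair_iff_eq_const (h2 : (2 : F) ≠ 0) {T : F → F} {c : F} :
    ((∀ x : F, x ≠ 0 → T x + x ^ k * T x⁻¹ = (1 + x ^ k) * c) ∧
        ∀ x : F, x ≠ 0 → T x + x ^ (k + 1) * T x⁻¹ = (1 + x ^ (k + 1)) * c) ↔
      ∀ x : F, x ≠ 0 → T x = c := by
  constructor
  · rintro ⟨hk, hk1⟩ x hx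
    by_cases hx1 : x = 1
    · subst hx1
      have h := hk 1 one_ne_zero
      rw [inv_one, one_pow] at h
      exact mul_left_cancel₀ h2 (by linear_combination h)
    · have hy : x⁻¹ ≠ 0 := inv_ne_zero hx
      have hy1 : x⁻¹ ^ k * (x⁻¹ - 1) ≠ 0 :=
        mul_ne_zero (pow_ne_zero _ hy) (sub_ne_zero.mpr (inv_ne_one.mpr hx1))
      have h := hk x⁻¹ hy
      have h' := hk1 x⁻¹ hy
      rw [inv_inv] at h h'
      exact mul_left_cancel₀ hy1 (by linear_combination h' - h)
  · intro hT
    refine ⟨fun x hx => ?_, fun x hx => ?_⟩ <;>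
      rw [hT x hx, hT x⁻¹ (inv_ne_zero hx)] <;> ring

end FunctionalEquation

section TameSchedules

variable {q : K} (W : List ℕ) (w : ℕ)

lemma tameFE_iff_splitLhs (hq : q ≠ 1) (hw : qint q w ≠ 0) :
    TameFE q W ↔ ∀ x : K, x ≠ 0 →
      splitLhs q (W.length + 1) (Apart q W w) (Bpart q W w) x +
          x ^ (W.length + 1) * splitLhs q (W.length + 1) (Apart q W w) (Bpart q W w) x⁻¹ =
        (1 + x ^ (W.length + 1)) * (qint q w * ((1 - q ^ 2) * (W.map (qint q)).prod)) := by
  refine forall₂_congr fun x hx => ?_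
  rw [← feLhs_add hx, mul_left_comm _ (qint q w), ← mul_right_inj' hw]
  simp only [feLhs, apart_add_bpart q W w _ hq]
  ring_nf

lemma tameFE_append_iff_splitLhs :
    TameFE q (W ++ [w]) ↔ ∀ x : K, x ≠ 0 →
      splitLhs q (W.length + 1) (Apart q W w) (Bpart q W w) x +
          x ^ (W.length + 1 + 1) * splitLhs q (W.length + 1) (Apart q W w) (Bpart q W w) x⁻¹ =
        (1 + x ^ (W.length + 1 + 1)) * (qint q w * ((1 - q ^ 2) * (W.map (qint q)).prod)) := by
  refine forall₂_congr fun x hx => ?_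
  rw [← feLhs_succ_add_mul hx]
  simp only [feLhs, qsched_append_eval, List.length_append, List.length_singleton,
    List.map_append, List.map_singleton, List.prod_append, List.prod_singleton]
  ring_nf

end TameSchedules

lemma Legal.one_le {W : List ℕ} (hW : Legal W) : ∀ a ∈ W, 1 ≤ a :=
  List.IsChain.induction (1 ≤ ·) W hW.2 (fun _ _ h _ => h.1) fun h => (hW.1 h).1

lemma qq_pow_ne_one {m : ℕ} (hm : 0 < m) : qq ^ m ≠ 1 := by
  intro h
  have hX : (Polynomial.X : Polynomial ℚ) ^ m = 1 :=
    RatFunc.algebraMap_injective ℚ (by simpa [qq] using h)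
  exact Polynomial.not_isUnit_X (IsUnit.of_pow_eq_one hX hm.ne')

lemma qq_ne_one : qq ≠ 1 := by
  simpa using qq_pow_ne_one one_pos

lemma qint_qq_ne_zero {m : ℕ} (hm : 0 < m) : qint qq m ≠ 0 :=
  right_ne_zero_of_mul <| by
    rw [one_sub_mul_qint]; exact sub_ne_zero.mpr (qq_pow_ne_one hm).symm

/-- Theorem 2.4: both Q_W and Q_{W,w} satisfy their functional
equations iff (1-q/x)A_{W,w}(x;q) + x^k(1-xq)B_{W,w}(1/x;q) = [w]_q(1-q²)∏[w_i]_q. -/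
theorem stmt9 (W : List ℕ) (w : ℕ) (hW : Legal (W ++ [w])) :
    (TameFE qq W ∧ TameFE qq (W ++ [w])) ↔
      ∀ x : K, x ≠ 0 →
        (1 - qq / x) * Apart qq W w x +
            x ^ (W.length + 1) * (1 - x * qq) * Bpart qq W w x⁻¹ =
          qint qq w * ((1 - qq ^ 2) * (W.map (qint qq)).prod) := by
  have hw : 0 < w := hW.one_le w (List.mem_append_right W (List.mem_singleton_self w))
  rw [tameFE_iff_splitLhs W w qq_ne_one (qint_qq_ne_zero hw), tameFE_append_iff_splitLhs]
  exact fe_pair_iff_eq_const two_ne_zero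

end
end
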